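/- Let H be a complex Hilbert space and let T ∈ B(H) be semi-hyponormal. Then the spectrum of T equals the set of all z ∈ ℂ for which there exists a sequence (x_n) of unit vectors in H with ‖(T − z)^* x_n‖ → 0 as n → ∞; equivalently, σ(T) = { conj(w) : w belongs to the approximate point spectrum of T^* }. -/

import Mathlib

open ContinuousLinearMap Filter Topology

variable {H : Type*} [NormedAddCommGroup H] [InnerProductSpace ℂ H] [CompleteSpace H]

/-- The absolute value `|T| = (T^*T)^{1/2}` of a bounded operator, via the
continuous functional calculus. -/
noncomputable def opAbs (T : H →L[ℂ] H) : H →L[ℂ] H :=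
  cfc Real.sqrt (adjoint T * T)

/-- `T` is semi-hyponormal: `|T| ≥ |T^*|` in the Loewner order. -/
def IsSemiHyponormal (T : H →L[ℂ] H) : Prop :=
  opAbs (adjoint T) ≤ opAbs T

open scoped InnerProductSpace NNReal

lemma opAbs_nonneg (T : H →L[ℂ] H) : 0 ≤ opAbs T :=
  cfc_nonneg (fun x _ => Real.sqrt_nonneg x)

lemma opAbs_isSelfAdjoint (T : H →L[ℂ] H) : IsSelfAdjoint (opAbs T) :=
  cfc_predicate _ _

lemma adjoint_mul_self_nonneg (T : H →L[ℂ] H) : 0 ≤ adjoint T * T := by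
  rw [← star_eq_adjoint]; exact star_mul_self_nonneg T

lemma cfc_sqrt_sq (P : H →L[ℂ] H) (hP : 0 ≤ P) :
    cfc Real.sqrt P * cfc Real.sqrt P = P := by
  rw [← cfc_mul ..]
  have h1 : cfc (fun x => Real.sqrt x * Real.sqrt x) P = cfc (fun x : ℝ => x) P := by
    apply cfc_congr
    intro x hx
    exact Real.mul_self_sqrt (spectrum_nonneg_of_nonneg hP hx)
  rw [h1, cfc_id' ℝ _]

lemma opAbs_mul_self (T : H →L[ℂ] H) : opAbs T * opAbs T = adjoint T * T :=
  cfc_sqrt_sq _ (adjoint_mul_self_nonneg T)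

lemma cfc_sqrt_mul_self (b : H →L[ℂ] H) (hb : 0 ≤ b) : cfc Real.sqrt (b * b) = b := by
  have h2 : b * b = cfc (fun x : ℝ => x * x) b := by
    rw [cfc_mul .., cfc_id' ℝ b]
  rw [h2, ← cfc_comp' Real.sqrt (fun x : ℝ => x * x) b]
  have h1 : cfc (fun x => Real.sqrt (x * x)) b = cfc (fun x : ℝ => x) b := by
    apply cfc_congr
    intro x hx
    show Real.sqrt (x * x) = x
    rw [Real.sqrt_mul_self (spectrum_nonneg_of_nonneg hb hx)]
  rw [h1, cfc_id' ℝ b]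

lemma inner_self_of_selfadjoint {S : H →L[ℂ] H} (hS : IsSelfAdjoint S) (x : H) :
    ⟪(S * S) x, x⟫_ℂ = ⟪S x, S x⟫_ℂ := by
  have h : adjoint S = S := hS.adjoint_eq
  calc ⟪S (S x), x⟫_ℂ = ⟪(adjoint S) (S x), x⟫_ℂ := by rw [h]
  _ = ⟪S x, S x⟫_ℂ := adjoint_inner_left S x (S x)

lemma norm_opAbs_apply (T : H →L[ℂ] H) (y : H) : ‖opAbs T y‖ = ‖T y‖ := by
  have h1 : ⟪opAbs T y, opAbs T y⟫_ℂ = ⟪T y, T y⟫_ℂ := by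
    rw [← inner_self_of_selfadjoint (opAbs_isSelfAdjoint T) y, opAbs_mul_self]
    show ⟪(adjoint T) (T y), y⟫_ℂ = ⟪T y, T y⟫_ℂ
    exact adjoint_inner_left T y (T y)
  rw [inner_self_eq_norm_sq_to_K, inner_self_eq_norm_sq_to_K] at h1
  have h2 : (‖opAbs T y‖ : ℝ) ^ 2 = ‖T y‖ ^ 2 := by exact_mod_cast h1
  nlinarith [norm_nonneg (opAbs T y), norm_nonneg (T y)]

lemma exists_partial_isometry (T : H →L[ℂ] H) :
    ∃ U : H →L[ℂ] H, U * opAbs T = T ∧ star U * U * opAbs T = opAbs T := by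
  classical
  set A := opAbs T with hA
  have hnorm : ∀ y, ‖A y‖ = ‖T y‖ := norm_opAbs_apply T
  have key : ∀ y y', A y = A y' → T y = T y' := by
    intro y y' h
    have h0 : ‖T y - T y'‖ = 0 := by
      rw [← map_sub, ← hnorm, map_sub, h, sub_self, norm_zero]
    simpa [sub_eq_zero] using norm_eq_zero.mp h0
  set D : Submodule ℂ H := LinearMap.range (A : H →ₗ[ℂ] H) with hD
  have spec : ∀ d : D, A (Classical.choose d.2) = (d : H) := fun d => Classical.choose_spec d.2
  set g0 : D → H := fun d => T (Classical.choose d.2) with hg0def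
  have hg0 : ∀ (d : D) (y : H), A y = (d : H) → g0 d = T y := by
    intro d y h
    exact key _ _ (by rw [spec d, h])
  have g0_add : ∀ d e : D, g0 (d + e) = g0 d + g0 e := by
    intro d e
    rw [hg0 (d + e) (Classical.choose d.2 + Classical.choose e.2) (by
      rw [map_add, spec d, spec e]; rfl)]
    rw [map_add]
  have g0_smul : ∀ (c : ℂ) (d : D), g0 (c • d) = c • g0 d := by
    intro c d
    rw [hg0 (c • d) (c • Classical.choose d.2) (by rw [map_smul, spec d]; rfl)]
    rw [map_smul]
  have g0_norm : ∀ d : D, ‖g0 d‖ = ‖d‖ := by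
    intro d
    rw [hg0 d (Classical.choose d.2) (spec d), ← hnorm, spec d]
    rfl
  set gi : D →ₗᵢ[ℂ] H :=
    ⟨{ toFun := g0, map_add' := g0_add, map_smul' := g0_smul }, g0_norm⟩ with hgi
  set K : Submodule ℂ H := D.topologicalClosure with hK
  haveI : CompleteSpace K := (Submodule.isClosed_topologicalClosure D).completeSpace_coe
  set ei : D →ₗᵢ[ℂ] K := ⟨Submodule.inclusion (Submodule.le_topologicalClosure D),
    fun x => rfl⟩ with hei
  set e : D →L[ℂ] K := ei.toContinuousLinearMap with he
  have h_e : IsUniformInducing e := ei.isometry.isUniformInducing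
  have h_dense : DenseRange e := by
    intro k
    rw [closure_subtype]
    have himg : (Subtype.val '' Set.range e : Set H) = (D : Set H) := by
      ext w
      constructor
      · rintro ⟨k', ⟨d, rfl⟩, rfl⟩
        exact d.2
      · intro hw
        exact ⟨e ⟨w, hw⟩, ⟨⟨w, hw⟩, rfl⟩, rfl⟩
    rw [himg]
    have : ((K : Submodule ℂ H) : Set H) = closure (D : Set H) :=
      Submodule.topologicalClosure_coe D
    rw [← this]
    exact k.2
  set f : D →L[ℂ] H := gi.toContinuousLinearMap with hf
  set U₁ : K →L[ℂ] H := f.extend e with hU₁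
  have hU₁e : ∀ d : D, U₁ (e d) = g0 d := fun d => ContinuousLinearMap.extend_eq f h_dense h_e d
  have hU₁norm : ∀ k : K, ‖U₁ k‖ = ‖k‖ := by
    intro k
    refine h_dense.induction_on k ?_ ?_
    · exact isClosed_eq U₁.continuous.norm continuous_norm
    · intro d
      rw [hU₁e d, g0_norm d]
      rfl
  have hU₁inner : ∀ k k' : K, ⟪U₁ k, U₁ k'⟫_ℂ = ⟪(k : H), (k' : H)⟫_ℂ := by
    intro k k'
    exact (LinearIsometry.inner_map_map ⟨U₁.toLinearMap, hU₁norm⟩ k k' :)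
  set P : H →L[ℂ] K := K.orthogonalProjectionOnto with hPdef
  set U : H →L[ℂ] H := U₁.comp P with hU
  have hmemK : ∀ y, A y ∈ K := fun y => Submodule.le_topologicalClosure D ⟨y, rfl⟩
  have hPA : ∀ y : H, P (A y) = e ⟨A y, ⟨y, rfl⟩⟩ := by
    intro y
    have h1 : P ((⟨A y, hmemK y⟩ : K) : H) = ⟨A y, hmemK y⟩ :=
      Submodule.orthogonalProjectionOnto_mem_subspace_eq_self (⟨A y, hmemK y⟩ : K)
    rw [show ((⟨A y, hmemK y⟩ : K) : H) = A y from rfl] at h1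
    rw [h1]
    rfl
  have hU1 : ∀ y, U (A y) = T y := by
    intro y
    show U₁ (P (A y)) = T y
    rw [hPA y, hU₁e]
    exact hg0 ⟨A y, ⟨y, rfl⟩⟩ y rfl
  refine ⟨U, by ext y; exact hU1 y, ?_⟩
  ext y
  apply ext_inner_right ℂ
  intro w
  show ⟪star U (U (A y)), w⟫_ℂ = ⟪A y, w⟫_ℂ
  rw [star_eq_adjoint, adjoint_inner_left]
  have hUAy : U (A y) = U₁ (e ⟨A y, ⟨y, rfl⟩⟩) := by
    show U₁ (P (A y)) = _
    rw [hPA y]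
  have hUw : U w = U₁ (P w) := rfl
  rw [hUAy, hUw, hU₁inner]
  have horth : w - ((P w : K) : H) ∈ Kᗮ := K.sub_starProjection_mem_orthogonal w
  have h0 : ⟪((⟨A y, hmemK y⟩ : K) : H), w - ((P w : K) : H)⟫_ℂ = 0 :=
    Submodule.inner_right_of_mem_orthogonal (hmemK y) horth
  rw [inner_sub_right] at h0
  have : ((e ⟨A y, ⟨y, rfl⟩⟩ : K) : H) = A y := rfl
  rw [this]
  have h0' : ⟪A y, w⟫_ℂ - ⟪A y, ((P w : K) : H)⟫_ℂ = 0 := h0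
  linear_combination -h0'

lemma norm_sq_eq_re_inner_mul (S : H →L[ℂ] H) {b : H →L[ℂ] H} (hb : 0 ≤ b)
    (hbS : b * b = S) (x : H) : RCLike.re ⟪S x, x⟫_ℂ = ‖b x‖ ^ 2 := by
  have hbsa : IsSelfAdjoint b := (IsSelfAdjoint.of_nonneg hb)
  rw [← hbS, inner_self_of_selfadjoint hbsa, inner_self_eq_norm_sq]

lemma re_inner_le_of_le {S S' : H →L[ℂ] H} (h : S ≤ S') (x : H) :
    RCLike.re ⟪S x, x⟫_ℂ ≤ RCLike.re ⟪S' x, x⟫_ℂ := by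
  have hpos := (ContinuousLinearMap.le_def S S').mp h
  have := hpos.inner_nonneg_left x
  rw [ContinuousLinearMap.sub_apply, inner_sub_left] at this
  have h3 := (Complex.le_def.mp this).1
  rw [Complex.zero_re, Complex.sub_re] at h3
  rw [RCLike.re_to_complex, RCLike.re_to_complex]
  linarith

lemma eig_adjoint (T : H →L[ℂ] H) (hT : IsSemiHyponormal T) {z : ℂ} {x : H} (hx : x ≠ 0)
    (hTx : T x = z • x) : ∃ w : H, w ≠ 0 ∧ star T w = (starRingEnd ℂ z) • w := by
  obtain ⟨U, hUA, hQ⟩ := exists_partial_isometry T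
  set A := opAbs T with hA
  have hA0 : 0 ≤ A := opAbs_nonneg T
  have hAsa : IsSelfAdjoint A := opAbs_isSelfAdjoint T
  set b : H →L[ℂ] H := U * A * star U with hb
  have hb0 : 0 ≤ b := by
    rw [nonneg_iff_isPositive]
    have h1 := ((nonneg_iff_isPositive A).mp hA0).conj_adjoint U
    rw [← star_eq_adjoint] at h1
    have : U ∘L A ∘L star U = b := by rw [hb, mul_assoc]; rfl
    rwa [this] at h1
  have hQ' : A * (star U * U) = A := by
    have := congrArg star hQ
    rwa [star_mul, star_mul, star_star, hAsa.star_eq, ← mul_assoc] at this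
  have hTT : T * star T = b * b := by
    have h2 : star T = A * star U := by
      rw [← hUA, star_mul, hAsa.star_eq]
    calc T * star T = (U * A) * (A * star U) := by rw [hUA, h2]
    _ = U * (A * A * star U) := by simp only [mul_assoc]
    _ = U * (A * (star U * (U * (A * star U)))) := by
        rw [show A * (star U * (U * (A * star U))) = (A * (star U * U)) * (A * star U) by
          simp only [mul_assoc], hQ', mul_assoc]
    _ = b * b := by simp only [hb, mul_assoc]
  have hBeq : opAbs (adjoint T) = b := by
    rw [opAbs, adjoint_adjoint, ← star_eq_adjoint, hTT, cfc_sqrt_mul_self _ hb0]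
  have hle : b ≤ A := by rw [← hBeq]; exact hT
  have hnormA : ∀ y, ‖A y‖ = ‖T y‖ := norm_opAbs_apply T
  by_cases hz : z = 0
  · -- kernel case
    refine ⟨x, hx, ?_⟩
    have hAx : A x = 0 := by
      have : ‖A x‖ = 0 := by rw [hnormA, hTx, hz, zero_smul, norm_zero]
      exact norm_eq_zero.mp this
    set Rb : H →L[ℂ] H := cfc Real.sqrt b with hRb
    have hRb2 : Rb * Rb = b := cfc_sqrt_sq b hb0
    have hRb0 : 0 ≤ Rb := cfc_nonneg (fun t _ => Real.sqrt_nonneg t)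
    have h1 : RCLike.re ⟪b x, x⟫_ℂ ≤ RCLike.re ⟪A x, x⟫_ℂ := re_inner_le_of_le hle x
    rw [hAx, inner_zero_left, map_zero] at h1
    rw [norm_sq_eq_re_inner_mul b hRb0 hRb2 x] at h1
    have hRbx : Rb x = 0 := by
      have := sq_nonneg ‖Rb x‖
      have h2 : ‖Rb x‖ ^ 2 = 0 := le_antisymm h1 this
      simpa using pow_eq_zero_iff (n := 2) (by norm_num) |>.mp h2
    have hbx : b x = 0 := by
      rw [← hRb2, ContinuousLinearMap.mul_apply, hRbx, map_zero]
    have : ‖star T x‖ = 0 := by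
      rw [star_eq_adjoint, ← norm_opAbs_apply (adjoint T) x, hBeq, hbx, norm_zero]
    rw [norm_eq_zero.mp this, hz, map_zero, zero_smul]
  · -- nonzero eigenvalue case
    set R : H →L[ℂ] H := cfc Real.sqrt A with hR
    have hR2 : R * R = A := cfc_sqrt_sq A hA0
    have hRsa : IsSelfAdjoint R := cfc_predicate _ _
    set Tt : H →L[ℂ] H := R * U * R with hTt
    have hsTt : star Tt = R * star U * R := by
      rw [hTt, star_mul, star_mul, hRsa.star_eq, mul_assoc]
    have h1 : Tt * star Tt ≤ R * A * R := by
      have hconj := star_left_conjugate_le_conjugate hle R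
      rw [hRsa.star_eq] at hconj
      have he : Tt * star Tt = R * b * R := by
        rw [hTt, hsTt, hb]
        calc R * U * R * (R * star U * R) = R * (U * (R * R) * star U) * R := by
              simp only [mul_assoc]
        _ = R * (U * A * star U) * R := by rw [hR2]
        _ = R * (U * A * star U) * R := rfl
      rw [he]
      exact hconj
    have h2 : R * A * R ≤ star Tt * Tt := by
      have hAle : A ≤ star U * A * U := by
        have hconj := star_left_conjugate_le_conjugate hle U
        have he : star U * b * U = A := by
          rw [hb]
          calc star U * (U * A * star U) * U = (star U * U * A) * (star U * U) := by
                simp only [mul_assoc]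
          _ = A * (star U * U) := by rw [hQ]
          _ = A := hQ'
        rwa [he] at hconj
      have hconj2 := star_left_conjugate_le_conjugate hAle R
      rw [hRsa.star_eq] at hconj2
      have he2 : R * (star U * A * U) * R = star Tt * Tt := by
        rw [hsTt, hTt]
        calc R * (star U * A * U) * R = R * (star U * ((R * R) * (U * R))) := by
              rw [hR2]; simp only [mul_assoc]
        _ = R * star U * R * (R * U * R) := by simp only [mul_assoc]
      rwa [he2] at hconj2
    have hypo : Tt * star Tt ≤ star Tt * Tt := h1.trans h2
    set v : H := R x with hv
    have hTtv : Tt v = z • v := by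
      rw [hTt, hv]
      show R (U (R (R x))) = z • R x
      have : R (R x) = A x := by rw [← ContinuousLinearMap.mul_apply, hR2]
      rw [this, show U (A x) = T x by rw [← ContinuousLinearMap.mul_apply, hUA], hTx, map_smul]
    -- hyponormal pointwise estimate
    have hest : ‖star Tt v‖ ^ 2 ≤ ‖z • v‖ ^ 2 := by
      have hp := re_inner_le_of_le hypo v
      have e1 : RCLike.re ⟪(star Tt * Tt) v, v⟫_ℂ = ‖Tt v‖ ^ 2 := by
        show RCLike.re ⟪star Tt (Tt v), v⟫_ℂ = ‖Tt v‖ ^ 2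
        rw [star_eq_adjoint, adjoint_inner_left, inner_self_eq_norm_sq]
      have e2 : RCLike.re ⟪(Tt * star Tt) v, v⟫_ℂ = ‖star Tt v‖ ^ 2 := by
        show RCLike.re ⟪Tt (star Tt v), v⟫_ℂ = ‖star Tt v‖ ^ 2
        rw [← adjoint_inner_right, ← star_eq_adjoint, inner_self_eq_norm_sq]
      rw [e1, e2, hTtv] at hp
      exact hp
    have hstv : star Tt v = (starRingEnd ℂ z) • v := by
      have hns := @norm_sub_sq ℂ _ _ _ _ (star Tt v) ((starRingEnd ℂ z) • v)
      have hinner : RCLike.re ⟪star Tt v, (starRingEnd ℂ z) • v⟫_ℂ = ‖z‖ ^ 2 * ‖v‖ ^ 2 := by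
        rw [inner_smul_right, star_eq_adjoint, adjoint_inner_left, hTtv, inner_smul_right,
          inner_self_eq_norm_sq_to_K]
        show ((starRingEnd ℂ) z * (z * ((‖v‖:ℝ) : ℂ) ^ 2)).re = ‖z‖ ^ 2 * ‖v‖ ^ 2
        rw [← mul_assoc, Complex.conj_mul']
        norm_cast
      have hnz : ‖(starRingEnd ℂ z) • v‖ ^ 2 = ‖z‖ ^ 2 * ‖v‖ ^ 2 := by
        rw [norm_smul]
        simp [mul_pow]
      have hzv : ‖z • v‖ ^ 2 = ‖z‖ ^ 2 * ‖v‖ ^ 2 := by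
        rw [norm_smul]
        simp [mul_pow]
      have : ‖star Tt v - (starRingEnd ℂ z) • v‖ ^ 2 ≤ 0 := by
        rw [hns, hinner, hnz]
        rw [hzv] at hest
        linarith
      have h0 : ‖star Tt v - (starRingEnd ℂ z) • v‖ = 0 := by
        nlinarith [norm_nonneg (star Tt v - (starRingEnd ℂ z) • v)]
      rw [← sub_eq_zero]
      exact norm_eq_zero.mp h0
    -- transfer back
    refine ⟨A x, ?_, ?_⟩
    · intro h0
      have : ‖A x‖ = 0 := by rw [h0, norm_zero]
      rw [hnormA, hTx, norm_smul] at this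
      rcases mul_eq_zero.mp this with h | h
      · exact hz (norm_eq_zero.mp h)
      · exact hx (norm_eq_zero.mp h)
    · have hsT : star T = A * star U := by rw [← hUA, star_mul, hAsa.star_eq]
      have hcalc : star T (A x) = R (star Tt v) := by
        rw [hsT, hsTt, hv]
        show A (star U (A x)) = R (R (star U (R (R x))))
        have hRRA : R (R x) = A x := by rw [← ContinuousLinearMap.mul_apply, hR2]
        rw [hRRA, ← ContinuousLinearMap.mul_apply R R, hR2]
      rw [hcalc, hstv, map_smul, hv, ← ContinuousLinearMap.mul_apply R R, hR2]

theorem stmt8 (T : H →L[ℂ] H) (hT : IsSemiHyponormal T) :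
    spectrum ℂ T = {z : ℂ | ∃ x : ℕ → H, (∀ n, ‖x n‖ = 1) ∧
      Tendsto (fun n => ‖adjoint (T - z • 1) (x n)‖) atTop (𝓝 0)} := by
  ext z
  simp only [Set.mem_setOf_eq]
  constructor
  · intro hz
    by_contra hseq
    push_neg at hseq
    set S : H →L[ℂ] H := T - z • 1 with hS
    have hadjS : adjoint (T - z • 1) = star S := (star_eq_adjoint S).symm
    -- lower bound for star S
    have hlow : ∃ c : ℝ, 0 < c ∧ ∀ y : H, c * ‖y‖ ≤ ‖star S y‖ := by
      by_contra hl
      push_neg at hl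
      choose Y hY using fun n : ℕ => hl (1 / (n + 1)) (by positivity)
      have hYne : ∀ n, 0 < ‖Y n‖ := by
        intro n
        by_contra h0
        push_neg at h0
        have h00 : ‖Y n‖ = 0 := le_antisymm h0 (norm_nonneg _)
        have h01 := hY n
        rw [h00, mul_zero] at h01
        exact absurd h01 (not_lt.mpr (norm_nonneg _))
      set x : ℕ → H := fun n => (‖Y n‖)⁻¹ • Y n with hx
      have hx1 : ∀ n, ‖x n‖ = 1 := by
        intro n
        rw [hx]
        simp only [norm_smul, norm_inv, norm_norm]
        exact inv_mul_cancel₀ (hYne n).ne'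
      apply hseq x hx1
      rw [hadjS]
      apply squeeze_zero (fun n => norm_nonneg _) (g := fun n : ℕ => 1 / (n + 1))
      · intro n
        have : star S (x n) = (‖Y n‖)⁻¹ • star S (Y n) := by rw [hx]; simp [map_smul]
        rw [this, norm_smul, norm_inv, norm_norm]
        calc ‖Y n‖⁻¹ * ‖star S (Y n)‖
            ≤ ‖Y n‖⁻¹ * (1 / (n + 1) * ‖Y n‖) :=
              mul_le_mul_of_nonneg_left (hY n).le (by positivity)
        _ = 1 / (n + 1) := by
              rw [mul_comm ((1:ℝ) / (n + 1)), ← mul_assoc, inv_mul_cancel₀ (hYne n).ne', one_mul]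
      · exact tendsto_one_div_add_atTop_nhds_zero_nat
    obtain ⟨c, hc, hlow⟩ := hlow
    have hunit : IsUnit (S * star S) := by
      set c2 : ℝ≥0 := ⟨c ^ 2, sq_nonneg c⟩ with hc2def
      have hc2 : 0 < c2 := by
        rw [← NNReal.coe_pos]
        show (0:ℝ) < c ^ 2
        positivity
      apply isUnit_of_forall_le_norm_inner_map (S * star S) hc2
      intro y
      have h1 : ⟪(S * star S) y, y⟫_ℂ = ⟪star S y, star S y⟫_ℂ := by
        show ⟪S (star S y), y⟫_ℂ = _
        rw [star_eq_adjoint, ← adjoint_inner_right]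
      rw [h1, inner_self_eq_norm_sq_to_K, norm_pow, RCLike.norm_ofReal, abs_norm]
      show ‖y‖ ^ 2 * (c ^ 2) ≤ _
      have h3 := hlow y
      nlinarith [norm_nonneg y, norm_nonneg (star S y), mul_self_nonneg (c * ‖y‖),
        mul_le_mul h3 h3 (by positivity) (norm_nonneg _)]
    have hinj : ∀ u : H, S u = 0 → u = 0 := by
      intro u hu
      by_contra hu0
      have hTu : T u = z • u := by
        have h' : T u - z • u = 0 := by
          have h'' : S u = T u - z • u := by
            simp [hS, ContinuousLinearMap.sub_apply, ContinuousLinearMap.smul_apply,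
              ContinuousLinearMap.one_apply]
          rw [← h'']
          exact hu
        exact sub_eq_zero.mp h'
      obtain ⟨w, hw0, hw⟩ := eig_adjoint T hT hu0 hTu
      have hSw : star S w = 0 := by
        rw [hS, star_sub, star_smul, star_one]
        simp only [ContinuousLinearMap.sub_apply, ContinuousLinearMap.smul_apply,
          ContinuousLinearMap.one_apply]
        rw [hw]
        simp [RingHom.id_apply]
      have := hlow w
      rw [hSw, norm_zero] at this
      have hwpos : 0 < ‖w‖ := norm_pos_iff.mpr hw0
      nlinarith
    have hsurj : ∀ y : H, ∃ w, S w = y := by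
      obtain ⟨u, hu⟩ := hunit
      intro y
      refine ⟨star S ((↑u⁻¹ : H →L[ℂ] H) y), ?_⟩
      have h1 : S * star S * (↑u⁻¹ : H →L[ℂ] H) = 1 := by
        rw [← hu, Units.mul_inv]
      calc S (star S ((↑u⁻¹ : H →L[ℂ] H) y)) = (S * star S * (↑u⁻¹ : H →L[ℂ] H)) y := rfl
      _ = y := by rw [h1]; rfl
    have hker : LinearMap.ker (S : H →ₗ[ℂ] H) = ⊥ := LinearMap.ker_eq_bot'.mpr hinj
    have hrange : LinearMap.range (S : H →ₗ[ℂ] H) = ⊤ := LinearMap.range_eq_top.mpr hsurj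
    set E := ContinuousLinearEquiv.ofBijective S hker hrange with hE
    have hSunit : IsUnit S := by
      have hES : ∀ y, E y = S y := fun y => by
        rw [hE, ContinuousLinearEquiv.coeFn_ofBijective]
      refine ⟨⟨S, (E.symm : H →L[ℂ] H), ?_, ?_⟩, rfl⟩
      · ext y
        simp only [ContinuousLinearMap.mul_apply, ContinuousLinearMap.one_apply,
          ContinuousLinearMap.coe_coe]
        rw [← hES]
        exact E.apply_symm_apply y
      · ext y
        simp only [ContinuousLinearMap.mul_apply, ContinuousLinearMap.one_apply,
          ContinuousLinearMap.coe_coe]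
        rw [← hES]
        exact E.symm_apply_apply y
    rw [spectrum.mem_iff] at hz
    apply hz
    have hrw : algebraMap ℂ (H →L[ℂ] H) z - T = -S := by
      rw [Algebra.algebraMap_eq_smul_one, hS, neg_sub]
    rw [hrw]
    exact hSunit.neg
  · rintro ⟨x, hx1, hx2⟩
    by_contra hz
    rw [spectrum.notMem_iff] at hz
    set S : H →L[ℂ] H := T - z • 1 with hS
    have hrw : algebraMap ℂ (H →L[ℂ] H) z - T = -S := by
      rw [Algebra.algebraMap_eq_smul_one, hS, neg_sub]
    rw [hrw] at hz
    have hSu : IsUnit S := by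
      have := hz.neg
      rwa [neg_neg] at this
    obtain ⟨u, hu⟩ := hSu.star
    have hb : ∀ n, (1:ℝ) ≤ ‖(↑u⁻¹ : H →L[ℂ] H)‖ * ‖star S (x n)‖ := by
      intro n
      have h1 : (↑u⁻¹ : H →L[ℂ] H) (star S (x n)) = x n := by
        calc (↑u⁻¹ : H →L[ℂ] H) (star S (x n)) = ((↑u⁻¹ : H →L[ℂ] H) * star S) (x n) := rfl
        _ = x n := by rw [← hu, Units.inv_mul]; rfl
      calc (1:ℝ) = ‖x n‖ := (hx1 n).symm
      _ = ‖(↑u⁻¹ : H →L[ℂ] H) (star S (x n))‖ := by rw [h1]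
      _ ≤ ‖(↑u⁻¹ : H →L[ℂ] H)‖ * ‖star S (x n)‖ := le_opNorm _ _
    have hlim : Tendsto (fun n => ‖(↑u⁻¹ : H →L[ℂ] H)‖ * ‖star S (x n)‖) atTop (𝓝 0) := by
      have h2 : Tendsto (fun n => ‖star S (x n)‖) atTop (𝓝 0) := by
        have : adjoint (T - z • 1) = star S := (star_eq_adjoint S).symm
        rwa [this] at hx2
      have := h2.const_mul ‖(↑u⁻¹ : H →L[ℂ] H)‖
      rwa [mul_zero] at this
    have : (1:ℝ) ≤ 0 := ge_of_tendsto' hlim hb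
    linarith
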